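/- In the no-data testing-an-innovation setup with fully known control distribution, assume q0 > 1/2. Then for every δ ∈ [0,1], sup over μ1 of R(δ,μ1) = max{1 − q0, q0 − q(δ)}, where q(δ) is the smallest q ∈ [0,q0] with δ + (1−δ)·F0(q) ≥ α. Consequently, δ is minimax regret if and only if q0 − q(δ) ≤ 1 − q0, every minimax regret rule has maximal regret 1 − q0, and in particular δ = 0 is minimax regret. -/

import Mathlib

open MeasureTheory Set Filter Topology

noncomputable section

/-- The set of `α`-quantiles of a Borel probability measure on `[0,1]`
(represented as a measure on `ℝ` giving mass 1 to `[0,1]`). -/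
def quantSet (α : ℝ) (μ : Measure ℝ) : Set ℝ :=
  {q | q ∈ Icc (0 : ℝ) 1 ∧ α ≤ (μ (Icc 0 q)).toReal ∧ 1 - α ≤ (μ (Icc q 1)).toReal}

/-- The `(α, r)`-quantile of `μ`: `r · sup Q(α,μ) + (1 - r) · inf Q(α,μ)`. -/
def quant (α r : ℝ) (μ : Measure ℝ) : ℝ :=
  r * sSup (quantSet α μ) + (1 - r) * sInf (quantSet α μ)

/-- `μ` is a Borel probability measure concentrated on `[0,1]`. -/
def IsProb01 (μ : Measure ℝ) : Prop :=
  IsProbabilityMeasure μ ∧ μ (Icc (0 : ℝ) 1) = 1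

/-- The mixture `p · μ1 + (1 - p) · μ0`. -/
def mix (p : ℝ) (μ0 μ1 : Measure ℝ) : Measure ℝ :=
  ENNReal.ofReal p • μ1 + ENNReal.ofReal (1 - p) • μ0

/-- The "Bernoulli" measure on `[0,1]`: mass `a` at `0` and mass `1 - a` at `1`. -/
def Ber (a : ℝ) : Measure ℝ :=
  ENNReal.ofReal a • Measure.dirac (0 : ℝ) + ENNReal.ofReal (1 - a) • Measure.dirac (1 : ℝ)

/-- Regret in the no-data testing-an-innovation setup with fully known control
distribution `μ0`, at `r = 0`. -/
def regretKC (α : ℝ) (μ0 : Measure ℝ) (δ : ℝ) (μ1 : Measure ℝ) : ℝ :=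
  max (quant α 0 μ0) (quant α 0 μ1) - quant α 0 (mix δ μ0 μ1)

/-- The set of regret values of the no-data rule `δ` over all states `μ1`. -/
def regretSetKC (α : ℝ) (μ0 : Measure ℝ) (δ : ℝ) : Set ℝ :=
  {v | ∃ μ1 : Measure ℝ, IsProb01 μ1 ∧ v = regretKC α μ0 δ μ1}

/-- The set `{q ∈ [0, q0] : δ + (1 - δ)·F0(q) ≥ α}` whose least element is `q(δ)`. -/
def thresholdSet (α : ℝ) (μ0 : Measure ℝ) (q0 δ : ℝ) : Set ℝ :=
  {q | q ∈ Icc (0 : ℝ) q0 ∧ α ≤ δ + (1 - δ) * (μ0 (Icc 0 q)).toReal}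

lemma quant_spec {α : ℝ} (hα : α ∈ Ioo (0:ℝ) 1) {μ : Measure ℝ} (hμ : IsProb01 μ) :
    IsLeast (quantSet α μ) (quant α 0 μ) ∧
    IsLeast {q | q ∈ Icc (0:ℝ) 1 ∧ α ≤ (μ (Icc 0 q)).toReal} (quant α 0 μ) := by
  haveI := hμ.1
  set S := {q | q ∈ Icc (0:ℝ) 1 ∧ α ≤ (μ (Icc 0 q)).toReal} with hSdef
  have hfin : ∀ s : Set ℝ, μ s ≠ ⊤ := fun s => (measure_lt_top μ s).ne
  have h1S : (1:ℝ) ∈ S := by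
    refine ⟨⟨zero_le_one, le_refl 1⟩, ?_⟩
    rw [hμ.2]; simp [hα.2.le]
  have hSne : S.Nonempty := ⟨1, h1S⟩
  have hbdd : BddBelow S := ⟨0, fun q hq => hq.1.1⟩
  set g := sInf S with hg
  have hg0 : 0 ≤ g := le_csInf hSne fun q hq => hq.1.1
  have hg1 : g ≤ 1 := csInf_le hbdd h1S
  have hkey : ∀ n : ℕ, ENNReal.ofReal α ≤ μ (Icc 0 (g + 1/(n+1))) := by
    intro n
    obtain ⟨q, hqS, hql⟩ := exists_lt_of_csInf_lt hSne
      (lt_add_of_pos_right g (by positivity : (0:ℝ) < 1/(n+1)))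
    calc ENNReal.ofReal α ≤ μ (Icc 0 q) := ENNReal.ofReal_le_of_le_toReal hqS.2
      _ ≤ _ := measure_mono (Icc_subset_Icc_right hql.le)
  have hInter : (⋂ n : ℕ, Icc (0:ℝ) (g + 1/(n+1))) = Icc 0 g := by
    ext x
    simp only [mem_iInter, mem_Icc]
    constructor
    · intro h
      refine ⟨(h 0).1, le_of_forall_pos_le_add fun ε hε => ?_⟩
      obtain ⟨n, hn⟩ := exists_nat_one_div_lt hε
      exact (h n).2.trans (by linarith)
    · rintro ⟨h0, h1⟩ n
      exact ⟨h0, h1.trans (le_add_of_nonneg_right (by positivity))⟩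
  have hFg : α ≤ (μ (Icc 0 g)).toReal := by
    have htend := tendsto_measure_iInter_atTop (μ := μ)
      (s := fun n : ℕ => Icc (0:ℝ) (g + 1/(n+1)))
      (fun n => measurableSet_Icc.nullMeasurableSet)
      (fun n m hnm => Icc_subset_Icc_right (by
        have hc : (n:ℝ) ≤ m := Nat.cast_le.mpr hnm
        have : (1:ℝ)/(m+1) ≤ 1/(n+1) := by
          apply one_div_le_one_div_of_le (by positivity)
          linarith
        linarith)) ⟨0, hfin _⟩
    rw [hInter] at htend
    have hle : ENNReal.ofReal α ≤ μ (Icc 0 g) := ge_of_tendsto htend (Eventually.of_forall hkey)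
    exact (ENNReal.ofReal_le_iff_le_toReal (hfin _)).1 hle
  have htail : 1 - α ≤ (μ (Icc g 1)).toReal := by
    have hdisj : Disjoint (Ico (0:ℝ) g) (Icc g 1) := by
      rw [Set.disjoint_left]; rintro x ⟨_, hx⟩ ⟨hx', _⟩; exact absurd hx' (not_le.2 hx)
    have hsplit : μ (Ico 0 g) + μ (Icc g 1) = 1 := by
      rw [← measure_union hdisj measurableSet_Icc, Ico_union_Icc_eq_Icc hg0 hg1, hμ.2]
    have hIco : μ (Ico 0 g) ≤ ENNReal.ofReal α := by
      rcases eq_or_lt_of_le hg0 with h | h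
      · simp [← h]
      · have hsub : ∀ n : ℕ, μ (Icc (0:ℝ) (g - g/(n+1))) ≤ ENNReal.ofReal α := by
          intro n
          have hlt : g - g/(n+1) < g := by
            have : (0:ℝ) < g/(n+1) := by positivity
            linarith
          have hnot : (g - g/(n+1)) ∉ S := fun hmem => absurd (csInf_le hbdd hmem) (not_le.2 hlt)
          have hmem01 : g - g/(n+1) ∈ Icc (0:ℝ) 1 := by
            constructor
            · have : g/(n+1) ≤ g := by
                rw [div_le_iff₀ (by positivity)]
                nlinarith [Nat.cast_nonneg (α := ℝ) n]
              linarith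
            · linarith
          have : ¬ (α ≤ (μ (Icc 0 (g - g/(n+1)))).toReal) := fun hc => hnot ⟨hmem01, hc⟩
          exact ENNReal.le_ofReal_iff_toReal_le (hfin _) hα.1.le |>.2 (not_le.1 this).le
        have hUnion : Ico (0:ℝ) g = ⋃ n : ℕ, Icc (0:ℝ) (g - g/(n+1)) := by
          ext x
          simp only [mem_Ico, mem_iUnion, mem_Icc]
          constructor
          · rintro ⟨hx0, hxg⟩
            obtain ⟨n, hn⟩ := exists_nat_one_div_lt
              (show (0:ℝ) < (g - x)/g from div_pos (by linarith) h)
            refine ⟨n, hx0, ?_⟩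
            rw [div_lt_div_iff₀ (by positivity) h] at hn
            have hgx : g / (n+1) < g - x := by
              rw [div_lt_iff₀ (by positivity)]
              nlinarith
            linarith
          · rintro ⟨n, hx0, hxn⟩
            have : (0:ℝ) < g/(n+1) := by positivity
            exact ⟨hx0, by linarith⟩
        have hdir : Directed (· ⊆ ·) (fun n : ℕ => Icc (0:ℝ) (g - g/(n+1))) := by
          intro n m
          refine ⟨max n m, Icc_subset_Icc_right ?_, Icc_subset_Icc_right ?_⟩ <;>
          · have h1 : (0:ℝ) < g := h
            gcongr <;> simp [Nat.cast_le, le_max_left, le_max_right]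
        rw [hUnion, hdir.measure_iUnion]
        exact iSup_le hsub
    have h1le : ENNReal.ofReal (1 - α) ≤ μ (Icc g 1) := by
      rw [ENNReal.ofReal_sub _ hα.1.le, ENNReal.ofReal_one]
      rw [tsub_le_iff_right]
      calc (1:ENNReal) = μ (Ico 0 g) + μ (Icc g 1) := hsplit.symm
        _ ≤ ENNReal.ofReal α + μ (Icc g 1) := by gcongr
        _ = μ (Icc g 1) + ENNReal.ofReal α := add_comm _ _
    exact (ENNReal.ofReal_le_iff_le_toReal (hfin _)).1 h1le
  have hgQ : g ∈ quantSet α μ := ⟨⟨hg0, hg1⟩, hFg, htail⟩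
  have hsub : quantSet α μ ⊆ S := fun q hq => ⟨hq.1, hq.2.1⟩
  have hlbQ : ∀ q ∈ quantSet α μ, g ≤ q := fun q hq => csInf_le hbdd (hsub hq)
  have hleastQ : IsLeast (quantSet α μ) g := ⟨hgQ, hlbQ⟩
  have hquant : quant α 0 μ = g := by
    rw [quant]; simp [hleastQ.csInf_eq]
  rw [hquant]
  refine ⟨hleastQ, ⟨⟨hg0, hg1⟩, hFg⟩, fun q hq => csInf_le hbdd hq⟩


lemma isprob_ne_top {μ : Measure ℝ} (h : IsProb01 μ) (s : Set ℝ) : μ s ≠ ⊤ := by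
  haveI := h.1; exact (measure_lt_top μ s).ne

lemma toReal_le_one {μ : Measure ℝ} (h : IsProb01 μ) (s : Set ℝ) : (μ s).toReal ≤ 1 := by
  haveI := h.1
  have h1 : μ s ≤ 1 := prob_le_one
  calc (μ s).toReal ≤ (1 : ENNReal).toReal := ENNReal.toReal_mono ENNReal.one_ne_top h1
    _ = 1 := by simp

lemma mix_apply (p : ℝ) (μ0 μ1 : Measure ℝ) (s : Set ℝ) :
    mix p μ0 μ1 s = ENNReal.ofReal p * μ1 s + ENNReal.ofReal (1-p) * μ0 s := by
  simp [mix]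

lemma isProb01_mix {p : ℝ} (hp : p ∈ Icc (0:ℝ) 1) {μ0 μ1 : Measure ℝ}
    (h0 : IsProb01 μ0) (h1 : IsProb01 μ1) : IsProb01 (mix p μ0 μ1) := by
  haveI := h0.1; haveI := h1.1
  have huniv : mix p μ0 μ1 univ = 1 := by
    rw [mix_apply, measure_univ, measure_univ, mul_one, mul_one,
      ← ENNReal.ofReal_add hp.1 (by linarith [hp.2])]
    norm_num
  refine ⟨⟨huniv⟩, ?_⟩
  rw [mix_apply, h0.2, h1.2, mul_one, mul_one, ← ENNReal.ofReal_add hp.1 (by linarith [hp.2])]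
  norm_num

lemma mix_toReal {p : ℝ} (hp0 : 0 ≤ p) (hp1 : p ≤ 1) {μ0 μ1 : Measure ℝ} (s : Set ℝ)
    (h0 : μ0 s ≠ ⊤) (h1 : μ1 s ≠ ⊤) :
    ((mix p μ0 μ1) s).toReal = p * (μ1 s).toReal + (1-p) * (μ0 s).toReal := by
  rw [mix_apply, ENNReal.toReal_add (ENNReal.mul_ne_top ENNReal.ofReal_ne_top h1)
    (ENNReal.mul_ne_top ENNReal.ofReal_ne_top h0), ENNReal.toReal_mul, ENNReal.toReal_mul,
    ENNReal.toReal_ofReal hp0, ENNReal.toReal_ofReal (by linarith)]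

lemma Ber_apply (a : ℝ) {s : Set ℝ} (hs : MeasurableSet s) :
    Ber a s = ENNReal.ofReal a * s.indicator 1 0 + ENNReal.ofReal (1-a) * s.indicator 1 1 := by
  simp only [Ber, Measure.add_apply, Measure.smul_apply, smul_eq_mul,
    Measure.dirac_apply' _ hs]

lemma Ber_Icc {a q : ℝ} (hq : 0 ≤ q) :
    Ber a (Icc 0 q) = ENNReal.ofReal a + (if 1 ≤ q then ENNReal.ofReal (1-a) else 0) := by
  rw [Ber_apply a measurableSet_Icc,
    Set.indicator_of_mem (by simp [hq] : (0:ℝ) ∈ Icc 0 q)]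
  by_cases h : (1:ℝ) ≤ q
  · rw [Set.indicator_of_mem (by simp [h] : (1:ℝ) ∈ Icc 0 q), if_pos h]
    simp
  · rw [Set.indicator_of_notMem (by simp [h] : (1:ℝ) ∉ Icc 0 q), if_neg h]
    simp

lemma isProb01_Ber {a : ℝ} (ha0 : 0 ≤ a) (ha1 : a ≤ 1) : IsProb01 (Ber a) := by
  have huniv : Ber a univ = 1 := by
    rw [Ber_apply a MeasurableSet.univ,
      Set.indicator_of_mem (mem_univ _), Set.indicator_of_mem (mem_univ _)]
    simp [← ENNReal.ofReal_add ha0 (by linarith : (0:ℝ) ≤ 1 - a)]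
  have hIcc : Ber a (Icc 0 1) = 1 := by
    rw [Ber_Icc zero_le_one, if_pos le_rfl, ← ENNReal.ofReal_add ha0 (by linarith)]
    norm_num
  exact ⟨⟨huniv⟩, hIcc⟩

lemma Ber_Icc_toReal_lt {a q : ℝ} (ha0 : 0 ≤ a) (hq0 : 0 ≤ q) (hq1 : q < 1) :
    (Ber a (Icc 0 q)).toReal = a := by
  rw [Ber_Icc hq0, if_neg (not_le.2 hq1), add_zero, ENNReal.toReal_ofReal ha0]

lemma Ber_Icc_toReal_ge {a q : ℝ} (ha0 : 0 ≤ a) (ha1 : a ≤ 1) (hq0 : 0 ≤ q) :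
    a ≤ (Ber a (Icc 0 q)).toReal := by
  have h := Ber_Icc (a := a) hq0
  have hle : ENNReal.ofReal a ≤ Ber a (Icc 0 q) := by rw [h]; exact le_add_of_nonneg_right zero_le
  calc a = (ENNReal.ofReal a).toReal := (ENNReal.toReal_ofReal ha0).symm
    _ ≤ _ := ENNReal.toReal_mono (isprob_ne_top (isProb01_Ber ha0 ha1) _) hle

/-- If `F(0) ≥ α`, the quantile is `0`. -/
lemma quant_eq_zero {α : ℝ} (hα : α ∈ Ioo (0:ℝ) 1) {μ : Measure ℝ} (hμ : IsProb01 μ)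
    (h : α ≤ (μ (Icc 0 0)).toReal) : quant α 0 μ = 0 := by
  have hs := quant_spec hα hμ
  refine le_antisymm (hs.1.2 ⟨⟨le_refl 0, zero_le_one⟩, h, ?_⟩) hs.1.1.1.1
  rw [hμ.2]; simp; linarith [hα.1]

lemma quant_Ber_one {α : ℝ} (hα : α ∈ Ioo (0:ℝ) 1) : quant α 0 (Ber 1) = 0 := by
  refine quant_eq_zero hα (isProb01_Ber zero_le_one le_rfl) ?_
  have := Ber_Icc_toReal_ge (a := 1) zero_le_one le_rfl (le_refl 0)
  linarith [hα.2]

lemma quant_Ber_lt {α a : ℝ} (hα : α ∈ Ioo (0:ℝ) 1) (ha0 : 0 ≤ a) (haα : a < α) :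
    quant α 0 (Ber a) = 1 := by
  have hp := isProb01_Ber ha0 (haα.le.trans hα.2.le)
  have hs := (quant_spec hα hp).1
  have hm01 := hs.1.1
  refine le_antisymm hm01.2 ?_
  by_contra hcon
  push_neg at hcon
  have := hs.1.2.1
  rw [Ber_Icc_toReal_lt ha0 hm01.1 hcon] at this
  linarith

lemma regret_ub {α : ℝ} (hα : α ∈ Ioo (0:ℝ) 1) {μ0 : Measure ℝ} (h0 : IsProb01 μ0)
    {q0 : ℝ} (hq0 : q0 = quant α 0 μ0)
    {δ : ℝ} (hδ0 : 0 ≤ δ) (hδ1 : δ ≤ 1) {qδ : ℝ} (hqδ : IsLeast (thresholdSet α μ0 q0 δ) qδ)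
    {μ1 : Measure ℝ} (h1 : IsProb01 μ1) :
    regretKC α μ0 δ μ1 ≤ max (1 - q0) (q0 - qδ) := by
  have hν : IsProb01 (mix δ μ0 μ1) := isProb01_mix ⟨hδ0, hδ1⟩ h0 h1
  have hs0 := (quant_spec hα h0).2
  have hs1 := (quant_spec hα h1).2
  have hsν := (quant_spec hα hν).2
  set m := quant α 0 μ1 with hm
  set t := quant α 0 (mix δ μ0 μ1) with ht
  have hq0' : IsLeast {q | q ∈ Icc (0:ℝ) 1 ∧ α ≤ (μ0 (Icc 0 q)).toReal} q0 := hq0 ▸ hs0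
  have hm01 : m ∈ Icc (0:ℝ) 1 := hs1.1.1
  have ht01 : t ∈ Icc (0:ℝ) 1 := hsν.1.1
  have hνt : α ≤ ((mix δ μ0 μ1) (Icc 0 t)).toReal := hsν.1.2
  rw [mix_toReal hδ0 hδ1 _ (isprob_ne_top h0 _) (isprob_ne_top h1 _)] at hνt
  have hF1le : (μ1 (Icc 0 t)).toReal ≤ 1 := toReal_le_one h1 _
  rcases le_or_gt m q0 with hcase | hcase
  · have hmax : max (quant α 0 μ0) m = q0 := by rw [← hq0]; exact max_eq_left hcase
    have htthr : α ≤ δ + (1-δ) * (μ0 (Icc 0 t)).toReal := by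
      nlinarith [mul_le_mul_of_nonneg_left hF1le hδ0]
    have hqδt : qδ ≤ t := by
      rcases le_or_gt t q0 with h | h
      · exact hqδ.2 ⟨⟨ht01.1, h⟩, htthr⟩
      · exact (hqδ.1.1.2).trans h.le
    calc regretKC α μ0 δ μ1 = q0 - t := by rw [regretKC, ← hm, ← ht, hmax]
      _ ≤ q0 - qδ := by linarith
      _ ≤ _ := le_max_right _ _
  · have hmax : max (quant α 0 μ0) m = m := by rw [← hq0]; exact max_eq_right hcase.le
    have hq0t : q0 ≤ t := by
      by_contra hcon
      push_neg at hcon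
      have hF0t : (μ0 (Icc 0 t)).toReal < α := by
        by_contra hc; push_neg at hc
        exact absurd (hq0'.2 ⟨ht01, hc⟩) (not_le.2 hcon)
      have hF1t : (μ1 (Icc 0 t)).toReal < α := by
        by_contra hc; push_neg at hc
        exact absurd (hs1.2 ⟨ht01, hc⟩) (not_le.2 (hcon.trans hcase))
      rcases eq_or_lt_of_le hδ0 with hδz | hδpos
      · rw [← hδz] at hνt; simp at hνt; linarith
      · nlinarith [mul_lt_mul_of_pos_left hF1t hδpos,
          mul_le_mul_of_nonneg_left hF0t.le (by linarith : (0:ℝ) ≤ 1-δ)]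
    calc regretKC α μ0 δ μ1 = m - t := by rw [regretKC, ← hm, ← ht, hmax]
      _ ≤ 1 - q0 := by linarith [hm01.2]
      _ ≤ _ := le_max_left _ _

lemma regret_Ber_one {α : ℝ} (hα : α ∈ Ioo (0:ℝ) 1) {μ0 : Measure ℝ} (h0 : IsProb01 μ0)
    {q0 : ℝ} (hq0 : q0 = quant α 0 μ0)
    {δ : ℝ} (hδ0 : 0 ≤ δ) (hδ1 : δ ≤ 1) {qδ : ℝ} (hqδ : IsLeast (thresholdSet α μ0 q0 δ) qδ) :
    regretKC α μ0 δ (Ber 1) = q0 - qδ := by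
  have hB : IsProb01 (Ber 1) := isProb01_Ber zero_le_one le_rfl
  have hν : IsProb01 (mix δ μ0 (Ber 1)) := isProb01_mix ⟨hδ0, hδ1⟩ h0 hB
  have hsν := (quant_spec hα hν).2
  have hq0' : IsLeast {q | q ∈ Icc (0:ℝ) 1 ∧ α ≤ (μ0 (Icc 0 q)).toReal} q0 :=
    hq0 ▸ (quant_spec hα h0).2
  have hq01 : q0 ∈ Icc (0:ℝ) 1 := hq0'.1.1
  have hBer1 : ∀ q : ℝ, 0 ≤ q → (Ber 1 (Icc 0 q)).toReal = 1 := by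
    intro q hqpos
    rw [Ber_Icc hqpos]
    by_cases h : (1:ℝ) ≤ q <;> simp [h]
  have hFν : ∀ q : ℝ, 0 ≤ q → ((mix δ μ0 (Ber 1)) (Icc 0 q)).toReal
      = δ + (1-δ) * (μ0 (Icc 0 q)).toReal := by
    intro q hqpos
    rw [mix_toReal hδ0 hδ1 _ (isprob_ne_top h0 _) (isprob_ne_top hB _), hBer1 q hqpos, mul_one]
  have hleast : IsLeast {q | q ∈ Icc (0:ℝ) 1 ∧ α ≤ ((mix δ μ0 (Ber 1)) (Icc 0 q)).toReal} qδ := by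
    have hqδ01 : qδ ∈ Icc (0:ℝ) 1 := ⟨hqδ.1.1.1, hqδ.1.1.2.trans hq01.2⟩
    constructor
    · exact ⟨hqδ01, by rw [hFν qδ hqδ01.1]; exact hqδ.1.2⟩
    · rintro q ⟨hq01', hq'⟩
      rw [hFν q hq01'.1] at hq'
      rcases le_or_gt q q0 with h | h
      · exact hqδ.2 ⟨⟨hq01'.1, h⟩, hq'⟩
      · exact hqδ.1.1.2.trans h.le
  have hquantν : quant α 0 (mix δ μ0 (Ber 1)) = qδ := hsν.unique hleast
  rw [regretKC, hquantν, quant_Ber_one hα, ← hq0, max_eq_left hq01.1]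

lemma regret_bddAbove {α : ℝ} (hα : α ∈ Ioo (0:ℝ) 1) {μ0 : Measure ℝ} (h0 : IsProb01 μ0)
    {δ : ℝ} (hδ0 : 0 ≤ δ) (hδ1 : δ ≤ 1) :
    ∀ v ∈ regretSetKC α μ0 δ, v ≤ 1 := by
  rintro v ⟨μ1, h1, rfl⟩
  have hν : IsProb01 (mix δ μ0 μ1) := isProb01_mix ⟨hδ0, hδ1⟩ h0 h1
  have hs0 := ((quant_spec hα h0).1.1.1 : quant α 0 μ0 ∈ Icc (0:ℝ) 1)
  have hs1 := ((quant_spec hα h1).1.1.1 : quant α 0 μ1 ∈ Icc (0:ℝ) 1)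
  have hsν := ((quant_spec hα hν).1.1.1 : quant α 0 (mix δ μ0 μ1) ∈ Icc (0:ℝ) 1)
  rw [regretKC]
  rcases max_cases (quant α 0 μ0) (quant α 0 μ1) with ⟨h, _⟩ | ⟨h, _⟩ <;> rw [h] <;>
    [linarith [hs0.2, hsν.1]; linarith [hs1.2, hsν.1]]

lemma regret_lb {α : ℝ} (hα : α ∈ Ioo (0:ℝ) 1) {μ0 : Measure ℝ} (h0 : IsProb01 μ0)
    {q0 : ℝ} (hq0 : q0 = quant α 0 μ0) (hF : α < (μ0 (Icc 0 q0)).toReal) (hq : 1/2 < q0)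
    {δ : ℝ} (hδ0 : 0 ≤ δ) (hδ1 : δ ≤ 1) :
    1 - q0 ≤ sSup (regretSetKC α μ0 δ) := by
  have hbdd : BddAbove (regretSetKC α μ0 δ) := ⟨1, regret_bddAbove hα h0 hδ0 hδ1⟩
  have hq0' : IsLeast {q | q ∈ Icc (0:ℝ) 1 ∧ α ≤ (μ0 (Icc 0 q)).toReal} q0 :=
    hq0 ▸ (quant_spec hα h0).2
  have hq01 : q0 ∈ Icc (0:ℝ) 1 := hq0'.1.1
  rcases eq_or_lt_of_le hδ1 with hδe | hδlt
  · -- δ = 1 : use μ1 = Ber 1, regret = q0 ≥ 1 - q0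
    have hB : IsProb01 (Ber 1) := isProb01_Ber zero_le_one le_rfl
    have hν : IsProb01 (mix δ μ0 (Ber 1)) := isProb01_mix ⟨hδ0, hδ1⟩ h0 hB
    have hquantν : quant α 0 (mix δ μ0 (Ber 1)) = 0 := by
      refine quant_eq_zero hα hν ?_
      rw [mix_toReal hδ0 hδ1 _ (isprob_ne_top h0 _) (isprob_ne_top hB _)]
      have hB0 : (Ber 1 (Icc 0 (0:ℝ))).toReal = 1 := by
        rw [Ber_Icc le_rfl]; norm_num
      rw [hB0, ← hδe.symm]
      norm_num
      linarith [hα.2]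
    have hmem : regretKC α μ0 δ (Ber 1) ∈ regretSetKC α μ0 δ := ⟨Ber 1, hB, rfl⟩
    have hval : regretKC α μ0 δ (Ber 1) = q0 := by
      rw [regretKC, hquantν, quant_Ber_one hα, ← hq0, max_eq_left hq01.1, sub_zero]
    have := le_csSup hbdd hmem
    rw [hval] at this
    linarith
  · -- δ < 1 : use μ1 = Ber a with a = α - ε
    set F0q0 := (μ0 (Icc 0 q0)).toReal with hF0q0
    set ε := min α ((1-δ) * (F0q0 - α)) with hε
    have hεpos : 0 < ε := lt_min hα.1 (by nlinarith)
    have hεα : ε ≤ α := min_le_left _ _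
    have hεF : ε ≤ (1-δ) * (F0q0 - α) := min_le_right _ _
    set a := α - ε with ha
    have ha0 : 0 ≤ a := by linarith
    have haα : a < α := by linarith
    have ha1 : a ≤ 1 := by linarith [hα.2]
    have hB : IsProb01 (Ber a) := isProb01_Ber ha0 ha1
    have hν : IsProb01 (mix δ μ0 (Ber a)) := isProb01_mix ⟨hδ0, hδ1⟩ h0 hB
    have hsν := (quant_spec hα hν).2
    have hq0mem : q0 ∈ {q | q ∈ Icc (0:ℝ) 1 ∧ α ≤ ((mix δ μ0 (Ber a)) (Icc 0 q)).toReal} := by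
      refine ⟨hq01, ?_⟩
      rw [mix_toReal hδ0 hδ1 _ (isprob_ne_top h0 _) (isprob_ne_top hB _)]
      have hge : a ≤ (Ber a (Icc 0 q0)).toReal := Ber_Icc_toReal_ge ha0 ha1 hq01.1
      have hδε : δ * ε ≤ ε := by nlinarith
      have : α ≤ δ * a + (1-δ) * F0q0 := by nlinarith
      nlinarith [mul_le_mul_of_nonneg_left hge hδ0]
    have hνq0 : quant α 0 (mix δ μ0 (Ber a)) ≤ q0 := hsν.2 hq0mem
    have hmem : regretKC α μ0 δ (Ber a) ∈ regretSetKC α μ0 δ := ⟨Ber a, hB, rfl⟩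
    have hval : 1 - q0 ≤ regretKC α μ0 δ (Ber a) := by
      rw [regretKC, quant_Ber_lt hα ha0 haα, ← hq0, max_eq_right hq01.2]
      linarith
    exact hval.trans (le_csSup hbdd hmem)

lemma sup_eq {α : ℝ} (hα : α ∈ Ioo (0:ℝ) 1) {μ0 : Measure ℝ} (h0 : IsProb01 μ0)
    {q0 : ℝ} (hq0 : q0 = quant α 0 μ0) (hF : α < (μ0 (Icc 0 q0)).toReal) (hq : 1/2 < q0)
    {δ : ℝ} (hδ0 : 0 ≤ δ) (hδ1 : δ ≤ 1) {qδ : ℝ} (hqδ : IsLeast (thresholdSet α μ0 q0 δ) qδ) :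
    sSup (regretSetKC α μ0 δ) = max (1 - q0) (q0 - qδ) := by
  have hub : ∀ v ∈ regretSetKC α μ0 δ, v ≤ max (1 - q0) (q0 - qδ) := by
    rintro v ⟨μ1, h1, rfl⟩
    exact regret_ub hα h0 hq0 hδ0 hδ1 hqδ h1
  have hne : (regretSetKC α μ0 δ).Nonempty :=
    ⟨_, ⟨Ber 1, isProb01_Ber zero_le_one le_rfl, rfl⟩⟩
  refine le_antisymm (csSup_le hne hub) (max_le ?_ ?_)
  · exact regret_lb hα h0 hq0 hF hq hδ0 hδ1
  · have hmem : regretKC α μ0 δ (Ber 1) ∈ regretSetKC α μ0 δ :=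
      ⟨Ber 1, isProb01_Ber zero_le_one le_rfl, rfl⟩
    have := le_csSup ⟨_, hub⟩ hmem
    rwa [regret_Ber_one hα h0 hq0 hδ0 hδ1 hqδ] at this

lemma least_zero {α : ℝ} (hα : α ∈ Ioo (0:ℝ) 1) {μ0 : Measure ℝ} (h0 : IsProb01 μ0)
    {q0 : ℝ} (hq0 : q0 = quant α 0 μ0) (hF : α < (μ0 (Icc 0 q0)).toReal) :
    IsLeast (thresholdSet α μ0 q0 0) q0 := by
  have hq0' : IsLeast {q | q ∈ Icc (0:ℝ) 1 ∧ α ≤ (μ0 (Icc 0 q)).toReal} q0 :=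
    hq0 ▸ (quant_spec hα h0).2
  constructor
  · exact ⟨⟨hq0'.1.1.1, le_rfl⟩, by rw [sub_zero, one_mul, zero_add]; exact hF.le⟩
  · rintro q ⟨hq01, hq'⟩
    rw [sub_zero, one_mul, zero_add] at hq'
    exact hq0'.2 ⟨⟨hq01.1, hq01.2.trans hq0'.1.1.2⟩, hq'⟩

lemma sup_zero {α : ℝ} (hα : α ∈ Ioo (0:ℝ) 1) {μ0 : Measure ℝ} (h0 : IsProb01 μ0)
    {q0 : ℝ} (hq0 : q0 = quant α 0 μ0) (hF : α < (μ0 (Icc 0 q0)).toReal) (hq : 1/2 < q0) :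
    sSup (regretSetKC α μ0 0) = 1 - q0 := by
  rw [sup_eq hα h0 hq0 hF hq le_rfl zero_le_one (least_zero hα h0 hq0 hF)]
  have hq01 : q0 ≤ 1 := (hq0 ▸ (quant_spec hα h0).2).1.1.2
  exact max_eq_left (by linarith)

/-- no-data known-control setup with `q0 > 1/2`: for every `δ ∈ [0,1]` with
least threshold point `q(δ)`, the supremum of regret equals `max{1 − q0, q0 − q(δ)}`; `δ` is
minimax regret iff `q0 − q(δ) ≤ 1 − q0`; every minimax regret rule has maximal regret
`1 − q0`; and `δ = 0` is minimax regret. -/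
theorem stmt16 (α : ℝ) (hα : α ∈ Ioo (0 : ℝ) 1)
    (μ0 : Measure ℝ) (h0 : IsProb01 μ0)
    (q0 : ℝ) (hq0 : q0 = quant α 0 μ0)
    (hF : α < (μ0 (Icc 0 q0)).toReal) (hq : 1 / 2 < q0) :
    (∀ δ ∈ Icc (0 : ℝ) 1, ∀ qδ : ℝ, IsLeast (thresholdSet α μ0 q0 δ) qδ →
      sSup (regretSetKC α μ0 δ) = max (1 - q0) (q0 - qδ) ∧
      ((∀ δ' ∈ Icc (0 : ℝ) 1, sSup (regretSetKC α μ0 δ) ≤ sSup (regretSetKC α μ0 δ')) ↔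
        q0 - qδ ≤ 1 - q0)) ∧
    (∀ δ ∈ Icc (0 : ℝ) 1,
      (∀ δ' ∈ Icc (0 : ℝ) 1, sSup (regretSetKC α μ0 δ) ≤ sSup (regretSetKC α μ0 δ')) →
      sSup (regretSetKC α μ0 δ) = 1 - q0) ∧
    (∀ δ' ∈ Icc (0 : ℝ) 1, sSup (regretSetKC α μ0 0) ≤ sSup (regretSetKC α μ0 δ')) := by
  refine ⟨?_, ?_, ?_⟩
  · intro δ hδ qδ hqδ
    have hsup := sup_eq hα h0 hq0 hF hq hδ.1 hδ.2 hqδ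
    refine ⟨hsup, ?_, ?_⟩
    · intro h
      have h0' := h 0 ⟨le_rfl, zero_le_one⟩
      rw [hsup, sup_zero hα h0 hq0 hF hq] at h0'
      exact le_trans (le_max_right _ _) h0'
    · intro hle δ' hδ'
      rw [hsup, max_eq_left hle]
      exact regret_lb hα h0 hq0 hF hq hδ'.1 hδ'.2
  · intro δ hδ hmin
    refine le_antisymm ?_ (regret_lb hα h0 hq0 hF hq hδ.1 hδ.2)
    have := hmin 0 ⟨le_rfl, zero_le_one⟩
    rwa [sup_zero hα h0 hq0 hF hq] at this
  · intro δ' hδ'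
    rw [sup_zero hα h0 hq0 hF hq]
    exact regret_lb hα h0 hq0 hF hq hδ'.1 hδ'.2
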